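/- The contents of the addable and removable boxes of a Young diagram interlace: if the addable boxes have contents a₁ < a₂ < ... < a_{k+1} and the removable boxes have contents b₁ < b₂ < ... < b_k, then a₁ < b₁ < a₂ < b₂ < ... < b_k < a_{k+1}, and moreover Σa_i - Σb_i = 0. -/
import Mathlib


open Finset

/-- A box can be added to the Young diagram `μ` keeping it a Young diagram. -/
def IsAddable (μ : YoungDiagram) (c : ℕ × ℕ) : Prop :=
  c ∉ μ ∧ IsLowerSet (insert c (μ.cells : Set (ℕ × ℕ)))

/-- A box can be removed from the Young diagram `μ` keeping it a Young diagram. -/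
def IsRemovable (μ : YoungDiagram) (c : ℕ × ℕ) : Prop :=
  c ∈ μ ∧ IsLowerSet ((μ.cells : Set (ℕ × ℕ)) \ {c})

/-- The content of a box. -/
def content (c : ℕ × ℕ) : ℤ := (c.1 : ℤ) - (c.2 : ℤ)

lemma mem_coe_cells' (μ : YoungDiagram) (p q : ℕ) :
    (p, q) ∈ (μ.cells : Set (ℕ × ℕ)) ↔ q < μ.rowLen p := by
  rw [Finset.mem_coe, YoungDiagram.mem_cells, YoungDiagram.mem_iff_lt_rowLen]

lemma addable_iff (μ : YoungDiagram) (p q : ℕ) :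
    IsAddable μ (p, q) ↔ q = μ.rowLen p ∧ (p = 0 ∨ μ.rowLen p < μ.rowLen (p - 1)) := by
  constructor
  · rintro ⟨hnm, hlow⟩
    rw [YoungDiagram.mem_iff_lt_rowLen, not_lt] at hnm
    have hq : q = μ.rowLen p := by
      by_contra h
      have h1 : μ.rowLen p < q := lt_of_le_of_ne hnm (Ne.symm h)
      have h2 : (p, q - 1) ∈ insert (p, q) (μ.cells : Set (ℕ × ℕ)) :=
        hlow (Prod.mk_le_mk.2 ⟨le_refl p, by omega⟩) (Set.mem_insert _ _)
      rw [Set.mem_insert_iff, Prod.mk.injEq, mem_coe_cells'] at h2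
      omega
    refine ⟨hq, ?_⟩
    rcases Nat.eq_zero_or_pos p with hp | hp
    · exact Or.inl hp
    · right
      have h2 : (p - 1, q) ∈ insert (p, q) (μ.cells : Set (ℕ × ℕ)) :=
        hlow (Prod.mk_le_mk.2 ⟨by omega, le_refl q⟩) (Set.mem_insert _ _)
      rw [Set.mem_insert_iff, Prod.mk.injEq, mem_coe_cells'] at h2
      omega
  · rintro ⟨hq, hp⟩
    constructor
    · rw [YoungDiagram.mem_iff_lt_rowLen]; omega
    · rintro ⟨x, y⟩ ⟨u, v⟩ hle hmem
      obtain ⟨h1, h2⟩ := Prod.mk_le_mk.1 hle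
      rw [Set.mem_insert_iff, Prod.mk.injEq, mem_coe_cells'] at hmem
      rw [Set.mem_insert_iff, Prod.mk.injEq, mem_coe_cells']
      rcases hmem with ⟨hx, hy⟩ | hmem
      · rw [hx] at h1; rw [hy] at h2
        by_cases huv : u = p ∧ v = q
        · exact Or.inl huv
        · right
          rcases Nat.lt_or_ge u p with hu | hu
          · have hp' : μ.rowLen p < μ.rowLen (p - 1) := by
              rcases hp with hp | hp
              · omega
              · exact hp
            have : μ.rowLen (p - 1) ≤ μ.rowLen u := μ.rowLen_anti u (p - 1) (by omega)
            omega
          · have hup : u = p := le_antisymm h1 hu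
            subst hup
            have : v ≠ q := fun h => huv ⟨rfl, h⟩
            omega
      · right
        have hmono : μ.rowLen x ≤ μ.rowLen u := μ.rowLen_anti u x h1
        omega

lemma removable_iff (μ : YoungDiagram) (p q : ℕ) :
    IsRemovable μ (p, q) ↔ q + 1 = μ.rowLen p ∧ μ.rowLen (p + 1) ≤ q := by
  have hsing : ∀ x y : ℕ, ((x, y) ∈ ({(p, q)} : Set (ℕ × ℕ))) ↔ (x = p ∧ y = q) := by
    intro x y; simp [Prod.ext_iff]
  constructor
  · rintro ⟨hm, hlow⟩
    rw [YoungDiagram.mem_iff_lt_rowLen] at hm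
    constructor
    · by_contra h
      have h1 : q + 1 < μ.rowLen p := by omega
      have hc : (p, q + 1) ∈ (μ.cells : Set (ℕ × ℕ)) := by rw [mem_coe_cells']; omega
      have hmem' : (p, q + 1) ∈ (μ.cells : Set (ℕ × ℕ)) \ {(p, q)} :=
        ⟨hc, by rw [Set.mem_singleton_iff]; intro hcon; rw [Prod.mk.injEq] at hcon; omega⟩
      have h2 := hlow (show ((p, q) : ℕ × ℕ) ≤ (p, q + 1) from Prod.mk_le_mk.2 ⟨le_refl p, by omega⟩) hmem'
      rw [Set.mem_diff, Set.mem_singleton_iff] at h2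
      exact h2.2 rfl
    · by_contra h
      have hc : (p + 1, q) ∈ (μ.cells : Set (ℕ × ℕ)) := by rw [mem_coe_cells']; omega
      have hmem' : (p + 1, q) ∈ (μ.cells : Set (ℕ × ℕ)) \ {(p, q)} :=
        ⟨hc, by rw [Set.mem_singleton_iff]; intro hcon; rw [Prod.mk.injEq] at hcon; omega⟩
      have h2 := hlow (show ((p, q) : ℕ × ℕ) ≤ (p + 1, q) from Prod.mk_le_mk.2 ⟨by omega, le_refl q⟩) hmem'
      rw [Set.mem_diff, Set.mem_singleton_iff] at h2
      exact h2.2 rfl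
  · rintro ⟨hq, hp⟩
    constructor
    · rw [YoungDiagram.mem_iff_lt_rowLen]; omega
    · rintro ⟨x, y⟩ ⟨u, v⟩ hle ⟨hmem, hne⟩
      rw [mem_coe_cells'] at hmem
      rw [hsing] at hne
      obtain ⟨h1, h2⟩ := Prod.mk_le_mk.1 hle
      constructor
      · rw [mem_coe_cells']
        have : μ.rowLen x ≤ μ.rowLen u := μ.rowLen_anti u x h1
        omega
      · rw [hsing]
        rintro ⟨hu, hv⟩
        rw [hu] at h1; rw [hv] at h2
        rcases Nat.lt_or_ge p x with hx | hx
        · have : μ.rowLen x ≤ μ.rowLen (p + 1) := μ.rowLen_anti (p + 1) x (by omega)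
          omega
        · have hxp : x = p := by omega
          refine hne ⟨hxp, ?_⟩
          rw [hxp] at hmem
          omega

/-- The "diagonal" function `i ↦ i - rowLen i`. -/
def fC (μ : YoungDiagram) (i : ℕ) : ℤ := (i : ℤ) - (μ.rowLen i : ℤ)

lemma fC_strictMono (μ : YoungDiagram) : StrictMono (fC μ) := by
  intro i j hij
  have h := μ.rowLen_anti i j (le_of_lt hij)
  unfold fC
  omega

/-- The set of rows `d` with `rowLen (d+1) < rowLen d` (rows containing a removable box). -/
def Drows (μ : YoungDiagram) : Finset ℕ :=
  (Finset.range (μ.colLen 0)).filter (fun d => μ.rowLen (d + 1) < μ.rowLen d)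

lemma rowLen_pos_lt_colLen (μ : YoungDiagram) (i : ℕ) (h : 0 < μ.rowLen i) :
    i < μ.colLen 0 := by
  rw [← YoungDiagram.mem_iff_lt_colLen, YoungDiagram.mem_iff_lt_rowLen]
  exact h

lemma mem_Drows (μ : YoungDiagram) (d : ℕ) :
    d ∈ Drows μ ↔ μ.rowLen (d + 1) < μ.rowLen d := by
  unfold Drows
  rw [Finset.mem_filter, Finset.mem_range]
  constructor
  · exact fun h => h.2
  · intro h
    exact ⟨rowLen_pos_lt_colLen μ d (by omega), h⟩

lemma addable_content_iff (μ : YoungDiagram) (z : ℤ) :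
    (∃ c, IsAddable μ c ∧ content c = z) ↔
      (z = fC μ 0 ∨ ∃ d ∈ Drows μ, fC μ (d + 1) = z) := by
  constructor
  · rintro ⟨⟨p, q⟩, hadd, hcon⟩
    rw [addable_iff] at hadd
    obtain ⟨hq, hp⟩ := hadd
    have hz : z = fC μ p := by
      unfold content at hcon
      unfold fC
      simp only at hcon
      omega
    rcases hp with hp | hp
    · left; rw [hz, hp]
    · right
      have hp0 : p ≠ 0 := by
        intro h; rw [h] at hp; simp at hp
      refine ⟨p - 1, ?_, ?_⟩
      · rw [mem_Drows]
        have : p - 1 + 1 = p := by omega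
        rw [this]
        exact hp
      · have : p - 1 + 1 = p := by omega
        rw [this, hz]
  · rintro (hz | ⟨d, hd, hz⟩)
    · refine ⟨(0, μ.rowLen 0), ?_, ?_⟩
      · rw [addable_iff]; exact ⟨rfl, Or.inl rfl⟩
      · unfold content fC at *
        simp only at hz ⊢
        omega
    · rw [mem_Drows] at hd
      refine ⟨(d + 1, μ.rowLen (d + 1)), ?_, ?_⟩
      · rw [addable_iff]
        refine ⟨rfl, Or.inr ?_⟩
        simpa using hd
      · unfold content fC at *
        simp only at hz ⊢
        omega

lemma removable_content_iff (μ : YoungDiagram) (z : ℤ) :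
    (∃ c, IsRemovable μ c ∧ content c = z) ↔
      ∃ d ∈ Drows μ, fC μ d + 1 = z := by
  constructor
  · rintro ⟨⟨p, q⟩, hrem, hcon⟩
    rw [removable_iff] at hrem
    obtain ⟨hq, hp⟩ := hrem
    refine ⟨p, ?_, ?_⟩
    · rw [mem_Drows]; omega
    · unfold content at hcon
      unfold fC
      simp only at hcon
      omega
  · rintro ⟨d, hd, hz⟩
    rw [mem_Drows] at hd
    refine ⟨(d, μ.rowLen d - 1), ?_, ?_⟩
    · rw [removable_iff]
      constructor
      · omega
      · omega
    · unfold content fC at *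
      simp only at hz ⊢
      omega

lemma rowLen_colLen_zero (μ : YoungDiagram) : μ.rowLen (μ.colLen 0) = 0 := by
  by_contra h
  have := rowLen_pos_lt_colLen μ (μ.colLen 0) (by omega)
  omega

lemma sum_Drows (μ : YoungDiagram) :
    ∑ d ∈ Drows μ, ((μ.rowLen d : ℤ) - (μ.rowLen (d + 1) : ℤ)) = (μ.rowLen 0 : ℤ) := by
  have hsub : Drows μ ⊆ Finset.range (μ.colLen 0) := Finset.filter_subset _ _
  rw [Finset.sum_subset hsub (fun d _ hd => by
        rw [mem_Drows] at hd
        have := μ.rowLen_anti d (d + 1) (by omega)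
        omega),
    Finset.sum_range_sub' (fun i => (μ.rowLen i : ℤ)), rowLen_colLen_zero]
  simp

/-- Enumeration of addable rows given the enumeration `e` of removable rows. -/
def rfun {k : ℕ} (e : Fin k → ℕ) : Fin (k + 1) → ℕ := fun j =>
  if h : (j : ℕ) = 0 then 0 else e ⟨(j : ℕ) - 1, by have := j.isLt; omega⟩ + 1

lemma rfun_zero {k : ℕ} (e : Fin k → ℕ) : rfun e 0 = 0 := by
  simp [rfun]

lemma rfun_succ {k : ℕ} (e : Fin k → ℕ) (i : Fin k) : rfun e i.succ = e i + 1 := by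
  unfold rfun
  rw [dif_neg (by simp [Fin.val_succ])]
  congr 2

lemma rfun_cases {k : ℕ} (e : Fin k → ℕ) (j : Fin (k + 1)) :
    rfun e j = 0 ∨ ∃ i, rfun e j = e i + 1 := by
  unfold rfun
  split_ifs with h
  · exact Or.inl rfl
  · exact Or.inr ⟨_, rfl⟩

lemma rfun_strictMono {k : ℕ} {e : Fin k → ℕ} (he : StrictMono e) :
    StrictMono (rfun e) := by
  intro i j hij
  rw [Fin.lt_def] at hij
  unfold rfun
  split_ifs with h1 h2 h2
  · omega
  · omega
  · omega
  · have hlt : (⟨(i : ℕ) - 1, by have := i.isLt; omega⟩ : Fin k) <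
        ⟨(j : ℕ) - 1, by have := j.isLt; omega⟩ := by
      rw [Fin.mk_lt_mk]
      omega
    have := he hlt
    omega

lemma rfun_castSucc_le {k : ℕ} {e : Fin k → ℕ} (he : StrictMono e) (i : Fin k) :
    rfun e i.castSucc ≤ e i := by
  rcases rfun_cases e i.castSucc with h | ⟨i', h⟩
  · rw [h]; exact Nat.zero_le _
  · have h2 : rfun e i'.succ = rfun e i.castSucc := by rw [rfun_succ, h]
    have h3 : i'.succ = i.castSucc := (rfun_strictMono he).injective h2
    have h4 : i' < i := by
      have hv := congrArg Fin.val h3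
      rw [Fin.val_succ, Fin.coe_castSucc] at hv
      rw [Fin.lt_def]
      omega
    have := he h4
    omega

/-- the contents of addable and removable boxes interlace:
a₁ < b₁ < a₂ < b₂ < ... < b_k < a_{k+1}, and Σaᵢ - Σbᵢ = 0. -/
theorem stmt3 (μ : YoungDiagram) (k : ℕ)
    (a : Fin (k + 1) → ℤ) (b : Fin k → ℤ)
    (ha : StrictMono a) (hb : StrictMono b)
    (haset : ∀ z : ℤ, (∃ i, a i = z) ↔ ∃ c, IsAddable μ c ∧ content c = z)
    (hbset : ∀ z : ℤ, (∃ i, b i = z) ↔ ∃ c, IsRemovable μ c ∧ content c = z) :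
    (∀ i : Fin k, a i.castSucc < b i ∧ b i < a i.succ) ∧
      (∑ i, a i) - (∑ i, b i) = 0 := by
  classical
  set A : Finset ℤ := insert (fC μ 0) ((Drows μ).image (fun d => fC μ (d + 1))) with hAdef
  set B : Finset ℤ := (Drows μ).image (fun d => fC μ d + 1) with hBdef
  have hmemA : ∀ z : ℤ, z ∈ A ↔ ∃ i, a i = z := fun z => by
    rw [hAdef, Finset.mem_insert, Finset.mem_image, haset, addable_content_iff]
  have hmemB : ∀ z : ℤ, z ∈ B ↔ ∃ i, b i = z := fun z => by
    rw [hBdef, Finset.mem_image, hbset, removable_content_iff]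
  have hA_eq : A = Finset.image a Finset.univ := by
    ext z
    rw [hmemA, Finset.mem_image]
    simp
  have hB_eq : B = Finset.image b Finset.univ := by
    ext z
    rw [hmemB, Finset.mem_image]
    simp
  have hAcard : A.card = k + 1 := by
    rw [hA_eq, Finset.card_image_of_injective _ ha.injective, Finset.card_univ, Fintype.card_fin]
  have hBcard : B.card = k := by
    rw [hB_eq, Finset.card_image_of_injective _ hb.injective, Finset.card_univ, Fintype.card_fin]
  have hfinj : Function.Injective (fun d : ℕ => fC μ d + 1) := by
    intro x y h
    simp only at h
    exact (fC_strictMono μ).injective (by omega)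
  have hDcard : (Drows μ).card = k := by
    rw [← hBcard, hBdef, Finset.card_image_of_injective _ hfinj]
  set e : Fin k → ℕ := fun i => (Drows μ).orderEmbOfFin hDcard i with hedef
  have he_mem : ∀ i, e i ∈ Drows μ := fun i => Finset.orderEmbOfFin_mem _ hDcard i
  have he_mono : StrictMono e := ((Drows μ).orderEmbOfFin hDcard).strictMono
  -- pin down b
  have hb_eq : ∀ i, b i = fC μ (e i) + 1 := by
    have h1 : b = B.orderEmbOfFin hBcard :=
      Finset.orderEmbOfFin_unique hBcard (fun x => (hmemB _).2 ⟨x, rfl⟩) hb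
    have h2 : (fun i => fC μ (e i) + 1) = ⇑(B.orderEmbOfFin hBcard) :=
      Finset.orderEmbOfFin_unique hBcard
        (fun x => by rw [hBdef]; exact Finset.mem_image.2 ⟨e x, he_mem x, rfl⟩)
        (fun i j hij => by have := fC_strictMono μ (he_mono hij); omega)
    intro i
    rw [h1, ← h2]
  -- pin down a
  have ha_eq : ∀ j, a j = fC μ (rfun e j) := by
    have h1 : a = A.orderEmbOfFin hAcard :=
      Finset.orderEmbOfFin_unique hAcard (fun x => (hmemA _).2 ⟨x, rfl⟩) ha
    have h2 : (fun j => fC μ (rfun e j)) = ⇑(A.orderEmbOfFin hAcard) :=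
      Finset.orderEmbOfFin_unique hAcard
        (fun x => by
          rcases rfun_cases e x with h | ⟨i, h⟩
          · rw [h, hAdef]; exact Finset.mem_insert_self _ _
          · rw [h, hAdef]
            exact Finset.mem_insert_of_mem (Finset.mem_image.2 ⟨e i, he_mem i, rfl⟩))
        (fun i j hij => fC_strictMono μ (rfun_strictMono he_mono hij))
    intro j
    rw [h1, ← h2]
  have hkey : ∀ i, μ.rowLen (e i + 1) < μ.rowLen (e i) := fun i => (mem_Drows μ _).1 (he_mem i)
  constructor
  · intro i
    rw [ha_eq, ha_eq, hb_eq, rfun_succ]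
    constructor
    · have h1 : rfun e i.castSucc ≤ e i := rfun_castSucc_le he_mono i
      have h2 : fC μ (rfun e i.castSucc) ≤ fC μ (e i) := (fC_strictMono μ).monotone h1
      omega
    · have := hkey i
      unfold fC
      push_cast
      omega
  · have hsa : ∑ j, a j = fC μ 0 + ∑ i : Fin k, fC μ (e i + 1) := by
      rw [Finset.sum_congr rfl (fun j _ => ha_eq j), Fin.sum_univ_succ]
      rw [rfun_zero]
      exact congrArg (fun t => fC μ 0 + t)
        (Finset.sum_congr rfl (fun i _ => by rw [rfun_succ]))
    have hsb : ∑ i, b i = ∑ i : Fin k, (fC μ (e i) + 1) := by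
      exact Finset.sum_congr rfl (fun i _ => hb_eq i)
    rw [hsa, hsb]
    have himg : Finset.image e Finset.univ = Drows μ := by
      ext d
      simp only [Finset.mem_image, Finset.mem_univ, true_and]
      constructor
      · rintro ⟨i, rfl⟩; exact he_mem i
      · intro hd
        have : d ∈ Set.range ((Drows μ).orderEmbOfFin hDcard) := by
          rw [Finset.range_orderEmbOfFin]
          exact hd
        obtain ⟨i, hi⟩ := this
        exact ⟨i, hi⟩
    have hsplit : (fC μ 0 + ∑ i : Fin k, fC μ (e i + 1)) - ∑ i : Fin k, (fC μ (e i) + 1)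
        = fC μ 0 + ∑ i : Fin k, ((μ.rowLen (e i) : ℤ) - (μ.rowLen (e i + 1) : ℤ)) := by
      rw [add_sub_assoc, ← Finset.sum_sub_distrib]
      congr 1
      refine Finset.sum_congr rfl (fun i _ => ?_)
      unfold fC
      push_cast
      ring
    rw [hsplit]
    have hsum : ∑ i : Fin k, ((μ.rowLen (e i) : ℤ) - (μ.rowLen (e i + 1) : ℤ))
        = ∑ d ∈ Drows μ, ((μ.rowLen d : ℤ) - (μ.rowLen (d + 1) : ℤ)) := by
      rw [← himg, Finset.sum_image (fun x _ y _ h => he_mono.injective h)]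
    rw [hsum, sum_Drows]
    simp [fC]
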